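/- arXiv:2304.14457 — 2 statements merged into one kernel-verified Lean document; each statement's English description precedes it below -/
import Mathlib

section
/- Let Λ = 𝔽₂[q]/(q²) and let V = Λ ⊗_{𝔽₂} Λ. Define σ : V → V to be the 𝔽₂-linear map determined by σ(x ⊗ y) = y ⊗ x + (q·y) ⊗ (q·x) for x, y ∈ Λ. Then σ ∘ σ = id_V. -/
open TensorProduct

/-- Let `Λ = 𝔽₂[q]/(q²)` (dual numbers over `ℤ/2`) and `V = Λ ⊗ Λ`. If
`σ : V → V` is the `𝔽₂`-linear map with `σ(x ⊗ y) = y ⊗ x + (q·y) ⊗ (q·x)`,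
then `σ ∘ σ = id`. -/
theorem stmt8
    (σ : (DualNumber (ZMod 2) ⊗[ZMod 2] DualNumber (ZMod 2)) →ₗ[ZMod 2]
      (DualNumber (ZMod 2) ⊗[ZMod 2] DualNumber (ZMod 2)))
    (hσ : ∀ x y : DualNumber (ZMod 2),
      σ (x ⊗ₜ[ZMod 2] y) =
        y ⊗ₜ[ZMod 2] x + (DualNumber.eps * y) ⊗ₜ[ZMod 2] (DualNumber.eps * x)) :
    σ ∘ₗ σ = LinearMap.id := by
  apply TensorProduct.ext'
  intro x y
  simp only [LinearMap.comp_apply, LinearMap.id_apply, hσ, map_add]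
  have h2 : ∀ a b : DualNumber (ZMod 2), a ⊗ₜ[ZMod 2] b + a ⊗ₜ[ZMod 2] b = 0 := by
    intro a b
    rw [← TensorProduct.add_tmul]
    have : a + a = 0 := by
      have : (2 : ZMod 2) = 0 := rfl
      calc a + a = (2 : ZMod 2) • a := by rw [two_smul]
        _ = 0 := by rw [this, zero_smul]
    rw [this, TensorProduct.zero_tmul]
  have heps : DualNumber.eps * (DualNumber.eps * x) = 0 := by
    rw [← mul_assoc, DualNumber.eps_mul_eps, zero_mul]
  rw [heps]
  have heps' : DualNumber.eps * (DualNumber.eps * y) = 0 := by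
    rw [← mul_assoc, DualNumber.eps_mul_eps, zero_mul]
  rw [heps', TensorProduct.zero_tmul]
  abel_nf
  rw [two_smul]
  rw [h2]
  simp
end

section
/- Let Λ = 𝔽₂[q]/(q²), let V = Λ ⊗_{𝔽₂} Λ, and let σ : V → V be the involution with σ(x ⊗ y) = y ⊗ x + (q·y) ⊗ (q·x). Let N = id + σ : V → V. Then ker(N) = im(N), and the map V/ker(N) → V^σ induced by N is an isomorphism of 𝔽₂-vector spaces, where V^σ = {v ∈ V : σ(v) = v} = ker(N). -/
open TensorProduct

set_option maxHeartbeats 1000000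
set_option synthInstance.maxHeartbeats 200000

lemma heeAux (z : DualNumber (ZMod 2)) : DualNumber.eps * (DualNumber.eps * z) = 0 := by
  rw [← mul_assoc, DualNumber.eps_mul_eps, zero_mul]

noncomputable def eAux : DualNumber (ZMod 2) ≃ₗ[ZMod 2] (Fin 2 → ZMod 2) :=
  (LinearEquiv.refl (ZMod 2) ((ZMod 2) × (ZMod 2))).trans
    (LinearEquiv.finTwoArrow (ZMod 2) (ZMod 2)).symm

noncomputable def BAux : Module.Basis (Fin 2) (ZMod 2) (DualNumber (ZMod 2)) := Module.Basis.ofEquivFun eAux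

lemma BAux_zero : BAux 0 = 1 := by
  have : (BAux 0 : (ZMod 2) × (ZMod 2)) = (1, 0) := by rw [BAux, Module.Basis.coe_ofEquivFun]; rfl
  exact this

lemma BAux_one : BAux 1 = DualNumber.eps := by
  have : (BAux 1 : (ZMod 2) × (ZMod 2)) = (0, 1) := by rw [BAux, Module.Basis.coe_ofEquivFun]; rfl
  exact this

/-- Let `Λ = 𝔽₂[q]/(q²)`, `V = Λ ⊗ Λ`, and let `σ : V → V` be the involution with
`σ(x ⊗ y) = y ⊗ x + (q·y) ⊗ (q·x)`. Set `N = id + σ`. Then `ker N = im N`, the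
`σ`-invariants `V^σ` coincide with `ker N`, and the map `V/ker N → V` induced by `N`
is injective with image exactly `ker N = V^σ`; i.e. the norm map from coinvariants
to invariants is an isomorphism. -/
theorem stmt10
    (σ : (DualNumber (ZMod 2) ⊗[ZMod 2] DualNumber (ZMod 2)) →ₗ[ZMod 2]
      (DualNumber (ZMod 2) ⊗[ZMod 2] DualNumber (ZMod 2)))
    (hσ : ∀ x y : DualNumber (ZMod 2),
      σ (x ⊗ₜ[ZMod 2] y) =
        y ⊗ₜ[ZMod 2] x + (DualNumber.eps * y) ⊗ₜ[ZMod 2] (DualNumber.eps * x))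
    (N : (DualNumber (ZMod 2) ⊗[ZMod 2] DualNumber (ZMod 2)) →ₗ[ZMod 2]
      (DualNumber (ZMod 2) ⊗[ZMod 2] DualNumber (ZMod 2)))
    (hN : N = LinearMap.id + σ) :
    LinearMap.ker N = LinearMap.range N ∧
    {v : DualNumber (ZMod 2) ⊗[ZMod 2] DualNumber (ZMod 2) | σ v = v} =
      (LinearMap.ker N : Set (DualNumber (ZMod 2) ⊗[ZMod 2] DualNumber (ZMod 2))) ∧
    Function.Injective ((LinearMap.ker N).liftQ N le_rfl) ∧
    LinearMap.range ((LinearMap.ker N).liftQ N le_rfl) = LinearMap.ker N := by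
  have h2 : ∀ w : DualNumber (ZMod 2) ⊗[ZMod 2] DualNumber (ZMod 2), w + w = 0 := fun w => by
    rw [← two_smul (ZMod 2) w, show (2 : ZMod 2) = 0 by decide, zero_smul]
  have hNv : ∀ v, N v = v + σ v := fun v => by simp [hN]
  have hσσ : ∀ v, σ (σ v) = v := by
    intro v
    induction v using TensorProduct.induction_on with
    | zero => simp
    | tmul x y =>
      rw [hσ, map_add, hσ, hσ, heeAux, heeAux, TensorProduct.zero_tmul, add_zero, add_assoc,
        h2, add_zero]
    | add a b ha hb => rw [map_add, map_add, ha, hb]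
  have hNN : ∀ v, N (N v) = 0 := by
    intro v
    rw [hNv, hNv, map_add, hσσ]
    rw [show v + σ v + (σ v + v) = (v + v) + (σ v + σ v) by abel, h2, h2, add_zero]
  -- shorthand
  set ε : DualNumber (ZMod 2) := DualNumber.eps with hε
  -- N on basis tensors
  have hN11 : N ((1 : DualNumber (ZMod 2)) ⊗ₜ[ZMod 2] 1) = ε ⊗ₜ[ZMod 2] ε := by
    rw [hNv, hσ, mul_one, ← add_assoc, h2, zero_add]
  have hNe1 : N (ε ⊗ₜ[ZMod 2] (1 : DualNumber (ZMod 2))) =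
      ε ⊗ₜ[ZMod 2] 1 + (1 : DualNumber (ZMod 2)) ⊗ₜ[ZMod 2] ε := by
    rw [hNv, hσ, mul_one, DualNumber.eps_mul_eps, TensorProduct.tmul_zero, add_zero]
  have hN1e : N ((1 : DualNumber (ZMod 2)) ⊗ₜ[ZMod 2] ε) =
      (1 : DualNumber (ZMod 2)) ⊗ₜ[ZMod 2] ε + ε ⊗ₜ[ZMod 2] 1 := by
    rw [hNv, hσ, mul_one, DualNumber.eps_mul_eps, TensorProduct.zero_tmul, add_zero]
  have hNee : N (ε ⊗ₜ[ZMod 2] ε) = 0 := by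
    rw [hNv, hσ, DualNumber.eps_mul_eps, TensorProduct.zero_tmul, add_zero, h2]
  -- the tensor basis
  let T : Module.Basis (Fin 2 × Fin 2) (ZMod 2) (DualNumber (ZMod 2) ⊗[ZMod 2] DualNumber (ZMod 2)) :=
    BAux.tensorProduct BAux
  have key : LinearMap.ker N = LinearMap.range N := by
    apply le_antisymm
    · intro v hv
      have hv0 : N v = 0 := hv
      set a := T.repr v (0, 0) with hA
      set c := T.repr v (0, 1) with hC
      set b := T.repr v (1, 0) with hB
      set d := T.repr v (1, 1) with hD
      have hv4 : v = a • ((1 : DualNumber (ZMod 2)) ⊗ₜ[ZMod 2] 1)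
          + c • ((1 : DualNumber (ZMod 2)) ⊗ₜ[ZMod 2] ε)
          + b • (ε ⊗ₜ[ZMod 2] (1 : DualNumber (ZMod 2)))
          + d • (ε ⊗ₜ[ZMod 2] ε) := by
        have := T.sum_repr v
        rw [Fintype.sum_prod_type] at this
        simp only [Fin.sum_univ_two] at this
        rw [← this]
        simp only [T, Module.Basis.tensorProduct_apply, BAux_zero, BAux_one, hε]
        abel
      have hNv4 : (0 : DualNumber (ZMod 2) ⊗[ZMod 2] DualNumber (ZMod 2)) =
          a • T (1, 1) + (b + c) • T (1, 0) + (b + c) • T (0, 1) := by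
        rw [← hv0]
        conv_lhs => rw [hv4]
        simp only [map_add, map_smul, hN11, hNe1, hN1e, hNee, smul_zero, add_zero]
        simp only [T, Module.Basis.tensorProduct_apply, BAux_zero, BAux_one, ← hε]
        rw [add_smul, add_smul, smul_add, smul_add]
        abel
      have hrepr := congrArg T.repr hNv4
      have ha : a = 0 := by
        have := congrFun (congrArg (↑· ) hrepr) (1, 1)
        simpa [Finsupp.single_apply, Module.Basis.repr_self, Prod.ext_iff] using this.symm
      have hbc : b + c = 0 := by
        have := congrFun (congrArg (↑· ) hrepr) (1, 0)
        simpa [Finsupp.single_apply, Module.Basis.repr_self, Prod.ext_iff] using this.symm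
      have hc : c = b := by
        have h2' : (2 : ZMod 2) = 0 := by decide
        linear_combination hbc - b * h2'
      refine ⟨b • (ε ⊗ₜ[ZMod 2] (1 : DualNumber (ZMod 2)))
        + d • ((1 : DualNumber (ZMod 2)) ⊗ₜ[ZMod 2] 1), ?_⟩
      rw [map_add, map_smul, map_smul, hNe1, hN11, hv4, ha, hc, zero_smul, zero_add, smul_add]
      abel
    · rintro x ⟨v, rfl⟩
      exact hNN v
  refine ⟨key, ?_, ?_, ?_⟩
  · ext v
    simp only [Set.mem_setOf_eq, SetLike.mem_coe, LinearMap.mem_ker]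
    constructor
    · intro h; rw [hNv, h, h2]
    · intro h
      have h0 : v + σ v = 0 := by rw [← hNv]; exact h
      calc σ v = v + (v + σ v) := by rw [← add_assoc, h2, zero_add]
        _ = v := by rw [h0, add_zero]
  · rw [← LinearMap.ker_eq_bot]
    exact Submodule.ker_liftQ_eq_bot' _ _ rfl
  · rw [Submodule.range_liftQ]
    exact key.symm
end
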